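/- arXiv:0901.3834 — 2 statements merged into one kernel-verified Lean document; each statement's English description precedes it below -/
import Mathlib

section
/- If n = p1*p2*p3 is a product of three primes which are not all equal (i.e., n is in A_3), then w(n) = P(p1+p2)*P(p1+p3)*P(p2+p3) is also a product of three primes which are not all equal. -/
/-- The largest prime factor of `n`. -/
def maxPrimeFac (n : ℕ) : ℕ := n.primeFactors.sup id

lemma maxPrimeFac_mem {m : ℕ} (hm : 2 ≤ m) : maxPrimeFac m ∈ m.primeFactors := by
  have hne : m.primeFactors.Nonempty := Nat.nonempty_primeFactors.mpr (by omega)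
  obtain ⟨q, hq, hval⟩ := Finset.exists_mem_eq_sup _ hne id
  rw [maxPrimeFac, hval]; exact hq

lemma maxPrimeFac_prime {m : ℕ} (hm : 2 ≤ m) : (maxPrimeFac m).Prime :=
  Nat.prime_of_mem_primeFactors (maxPrimeFac_mem hm)

lemma maxPrimeFac_dvd {m : ℕ} (hm : 2 ≤ m) : maxPrimeFac m ∣ m :=
  Nat.dvd_of_mem_primeFactors (maxPrimeFac_mem hm)

lemma le_maxPrimeFac {m q : ℕ} (hq : q.Prime) (hd : q ∣ m) (hm : m ≠ 0) :
    q ≤ maxPrimeFac m :=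
  Finset.le_sup (f := id) (Nat.mem_primeFactors.mpr ⟨hq, hd, hm⟩)

lemma eight_dvd_of_maxPrimeFac_eq_two {m : ℕ} (hm : 6 ≤ m)
    (h2 : maxPrimeFac m = 2) : 8 ∣ m := by
  have hpow : m = 2 ^ m.primeFactorsList.length := by
    refine Nat.eq_prime_pow_of_unique_prime_dvd (by omega) (fun {d} hd hdvd => ?_)
    have h1 : d ≤ 2 := h2 ▸ le_maxPrimeFac hd hdvd (by omega)
    have := hd.two_le
    omega
  have hk : 3 ≤ m.primeFactorsList.length := by
    by_contra h
    interval_cases h : m.primeFactorsList.length <;> omega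
  calc (8 : ℕ) = 2 ^ 3 := rfl
    _ ∣ 2 ^ m.primeFactorsList.length := pow_dvd_pow 2 hk
    _ = m := hpow.symm

theorem stmt_1 (p1 p2 p3 : ℕ) (h1 : p1.Prime) (h2 : p2.Prime) (h3 : p3.Prime)
    (hne : ¬(p1 = p2 ∧ p2 = p3)) :
    ∃ q1 q2 q3 : ℕ, q1.Prime ∧ q2.Prime ∧ q3.Prime ∧ ¬(q1 = q2 ∧ q2 = q3) ∧
      maxPrimeFac (p1 + p2) * maxPrimeFac (p1 + p3) * maxPrimeFac (p2 + p3)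
        = q1 * q2 * q3 := by
  have hp1 := h1.two_le
  have hp2 := h2.two_le
  have hp3 := h3.two_le
  have hs12 : 2 ≤ p1 + p2 := by omega
  have hs13 : 2 ≤ p1 + p3 := by omega
  have hs23 : 2 ≤ p2 + p3 := by omega
  refine ⟨_, _, _, maxPrimeFac_prime hs12, maxPrimeFac_prime hs13,
    maxPrimeFac_prime hs23, ?_, rfl⟩
  rintro ⟨e12, e23⟩
  set q := maxPrimeFac (p2 + p3) with hq
  have hqp : q.Prime := maxPrimeFac_prime hs23
  have d12 : q ∣ p1 + p2 := e23 ▸ e12 ▸ maxPrimeFac_dvd hs12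
  have d13 : q ∣ p1 + p3 := e23 ▸ maxPrimeFac_dvd hs13
  have d23 : q ∣ p2 + p3 := maxPrimeFac_dvd hs23
  rcases eq_or_ne q 2 with hq2 | hq2
  · -- q = 2 : all sums even, primes same parity
    have he12 : 2 ∣ p1 + p2 := hq2 ▸ d12
    have he13 : 2 ∣ p1 + p3 := hq2 ▸ d13
    -- all primes have the same parity
    rcases Nat.even_or_odd p1 with hpar | hpar
    · -- p1 even, so p1 = 2, then p2, p3 even so all = 2
      have e1 : p1 = 2 := ((Nat.Prime.even_iff h1).mp hpar)
      have e2 : p2 = 2 := (Nat.Prime.even_iff h2).mp (by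
        rcases he12 with ⟨k, hk⟩; exact ⟨k - 1, by omega⟩)
      have e3 : p3 = 2 := (Nat.Prime.even_iff h3).mp (by
        rcases he13 with ⟨k, hk⟩; exact ⟨k - 1, by omega⟩)
      exact hne ⟨e1.trans e2.symm, e2.trans e3.symm⟩
    · -- all odd, all ≥ 3, sums ≥ 6, each sum divisible by 8
      have o1 : ¬ (2 ∣ p1) := by rcases hpar with ⟨k, hk⟩; omega
      have o2 : ¬ (2 ∣ p2) := by
        intro hd; rcases hd with ⟨k, hk⟩; rcases he12 with ⟨j, hj⟩
        rcases hpar with ⟨i, hi⟩; omega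
      have o3 : ¬ (2 ∣ p3) := by
        intro hd; rcases hd with ⟨k, hk⟩; rcases he13 with ⟨j, hj⟩
        rcases hpar with ⟨i, hi⟩; omega
      have g2 : 3 ≤ p2 := by omega
      have g3 : 3 ≤ p3 := by omega
      have g1 : 3 ≤ p1 := by omega
      have E12 : 8 ∣ p1 + p2 := eight_dvd_of_maxPrimeFac_eq_two (by omega) (e12.trans (e23.trans hq2))
      have E13 : 8 ∣ p1 + p3 := eight_dvd_of_maxPrimeFac_eq_two (by omega) (e23.trans hq2)
      have E23 : 8 ∣ p2 + p3 := eight_dvd_of_maxPrimeFac_eq_two (by omega) hq2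
      rcases E12 with ⟨a, ha⟩; rcases E13 with ⟨b, hb⟩; rcases E23 with ⟨c, hc⟩
      -- 2*p1 = 8a + 8b - 8c, so 4 ∣ p1, contradiction with p1 odd
      exact o1 ⟨2 * (a + b) - 2 * c - p1, by omega⟩
  · -- q odd: q ∣ 2 p1, 2 p2, 2 p3, so q = p1 = p2 = p3
    have key : ∀ x y z : ℕ, q ∣ x + y → q ∣ x + z → q ∣ y + z → x.Prime → q = x := by
      intro x y z dxy dxz dyz hx
      have h2x : q ∣ 2 * x := by
        have : q ∣ (x + y) + (x + z) := dvd_add dxy dxz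
        have h' : (x + y) + (x + z) = 2 * x + (y + z) := by ring
        rw [h'] at this
        exact (Nat.dvd_add_right dyz).mp (by rwa [Nat.add_comm] at this)
      rcases (Nat.Prime.dvd_mul hqp).mp h2x with h | h
      · exact absurd ((Nat.prime_dvd_prime_iff_eq hqp Nat.prime_two).mp h) hq2
      · exact ((Nat.prime_dvd_prime_iff_eq hqp hx).mp h)
    have k1 := key p1 p2 p3 d12 d13 d23 h1
    have k2 := key p2 p1 p3 (by rwa [Nat.add_comm]) d23 d13 h2
    have k3 := key p3 p1 p2 (by rwa [Nat.add_comm]) (by rwa [Nat.add_comm]) d12 h3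
    exact hne ⟨k1 ▸ k2 ▸ rfl, k2 ▸ k3 ▸ rfl⟩
end

section
/- For all sufficiently large x, the sum over primes r with x^{1/2} log x < r ≤ 2 x^{1/2} log x and over primes p1 with x < p1 ≤ 2x of the square of the discrepancy ( #{primes p : x < p ≤ 2x, p ≡ -p1 (mod r)} - (1/r) * #{primes p : x < p ≤ 2x} )^2 is O(x^2 / log x). -/
/-!
Let `A` be the set of primes in `(x, 2x]` and `S(t) = ∑_{n ∈ A} e(nt)`. For a fixed prime `r`, the
count of `p ∈ A` with `r ∣ p + p1` only depends on the residue of `-p1` mod `r`, so grouping `p1` by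
residue class and bounding each class by `x/r + 2` reduces the inner sum to `x/r + 2` times the
variance of the residue counts, which by discrete Parseval is `r⁻¹ ∑_{0<h<r} |S(h/r)|²`.

The fractions `h/r` with `r` prime in `(R, 2R]` are `(2R)⁻²`-separated, so the large sieve bounds
their total by `(4R² + O(x)) |A|`. The large sieve itself follows from Gallagher's inequality
`f(t) ≤ δ⁻¹ ∫ f + ∫ |f'|` over a window of width `δ`, applied to `f = |S|²` on disjoint windows,
together with Parseval on `[0, 1]` for `S` and `S'`. With `R = √x log x` the whole sum is
`O(x |A|)`, and Chebyshev's bound `|A| log x = O(x)` finishes.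
-/

open Finset Real

/-- The finite set of primes `n` with `a < n ≤ b`. -/
noncomputable def primesIn (a b : ℝ) : Finset ℕ :=
  (Finset.Icc 1 ⌈b⌉₊).filter fun n => n.Prime ∧ a < (n : ℝ) ∧ (n : ℝ) ≤ b

open MeasureTheory
open scoped FourierTransform ComplexConjugate

lemma fourierChar_intCast (k : ℤ) : (𝐞 k : ℂ) = 1 := by
  rw [fourierChar_apply', mul_comm, Circle.exp_int_mul_two_pi, Circle.coe_one]

lemma fourierChar_eq_one_iff {y : ℝ} : 𝐞 y = 1 ↔ ∃ k : ℤ, y = k := by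
  rw [fourierChar_apply', Circle.exp_eq_one]
  refine exists_congr fun k => ?_
  constructor <;> intro h
  · nlinarith [pi_pos]
  · rw [h]; ring

lemma fourierChar_mul_conj (a b : ℝ) : (𝐞 a : ℂ) * conj (𝐞 b : ℂ) = 𝐞 (a - b) := by
  rw [← Circle.coe_inv_eq_conj, ← Circle.coe_mul, ← div_eq_mul_inv, AddChar.map_sub_eq_div]

lemma integral_fourierChar_intCast_mul (k : ℤ) :
    ∫ t in (0 : ℝ)..1, (𝐞 (k * t) : ℂ) = if k = 0 then 1 else 0 := by
  split_ifs with hk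
  · simp [hk]
  have hc : 2 * π * Complex.I * k ≠ 0 := by simp [hk, pi_ne_zero]
  have he (t : ℝ) : (𝐞 (k * t) : ℂ) = Complex.exp (2 * π * Complex.I * k * t) := by
    rw [fourierChar_apply]; push_cast; ring_nf
  simp_rw [he, integral_exp_mul_complex hc, ← he, mul_one, fourierChar_intCast]
  simp

lemma sum_range_fourierChar_mul_div (k : ℤ) {r : ℕ} (hr : 0 < r) :
    ∑ h ∈ range r, (𝐞 (k * h / r) : ℂ) = if (r : ℤ) ∣ k then (r : ℂ) else 0 := by
  have hr0 : (r : ℝ) ≠ 0 := by positivity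
  have hpow (h : ℕ) : (𝐞 (k * h / r) : ℂ) = (𝐞 (k / r) : ℂ) ^ h := by
    rw [← Circle.coe_pow, ← AddChar.map_nsmul_eq_pow, nsmul_eq_mul]; ring_nf
  simp_rw [hpow]
  split_ifs with hdvd
  · obtain ⟨j, rfl⟩ := hdvd
    have hj : ((r * j : ℤ) : ℝ) / r = j := by push_cast; field_simp
    simp only [hj, fourierChar_intCast, one_pow, sum_const, card_range, nsmul_eq_mul, mul_one]
  · have hne : (𝐞 (k / r) : ℂ) ≠ 1 := by
      rw [Ne, Circle.coe_eq_one, fourierChar_eq_one_iff]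
      rintro ⟨j, hj⟩
      refine hdvd ⟨j, ?_⟩
      field_simp at hj
      exact_mod_cast hj
    have hr1 : (𝐞 (k / r) : ℂ) ^ r = 1 := by
      rw [← hpow, mul_div_cancel_right₀ _ hr0, fourierChar_intCast]
    rw [geom_sum_eq hne, hr1, sub_self, zero_div]

noncomputable def expSum (A : Finset ℕ) (a : ℕ → ℂ) (t : ℝ) : ℂ :=
  ∑ n ∈ A, a n * 𝐞 (n * t)

lemma continuous_fourierChar_mul (c : ℝ) : Continuous fun t : ℝ => (𝐞 (c * t) : ℂ) := by
  fun_prop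

lemma expSum_mul_conj (A : Finset ℕ) (a : ℕ → ℂ) (t : ℝ) :
    expSum A a t * conj (expSum A a t) =
      ∑ n ∈ A, ∑ m ∈ A, a n * conj (a m) * 𝐞 (((n : ℤ) - m : ℤ) * t) := by
  rw [expSum, map_sum, sum_mul_sum]
  refine sum_congr rfl fun n _ => sum_congr rfl fun m _ => ?_
  rw [(starRingEnd ℂ).map_mul, mul_mul_mul_comm, fourierChar_mul_conj]
  push_cast
  ring_nf

theorem integral_norm_sq_expSum (A : Finset ℕ) (a : ℕ → ℂ) :
    ∫ t in (0 : ℝ)..1, ‖expSum A a t‖ ^ 2 = ∑ n ∈ A, ‖a n‖ ^ 2 := by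
  apply Complex.ofReal_injective
  rw [← intervalIntegral.integral_ofReal]
  push_cast
  simp_rw [← Complex.mul_conj', expSum_mul_conj]
  have hint (n m : ℕ) : ∫ t in (0 : ℝ)..1, a n * conj (a m) * 𝐞 (((n : ℤ) - m : ℤ) * t) =
      if n = m then a n * conj (a m) else 0 := by
    rw [intervalIntegral.integral_const_mul, integral_fourierChar_intCast_mul]
    simp [sub_eq_zero]
  rw [intervalIntegral.integral_finsetSum fun n _ => ?_]
  · refine sum_congr rfl fun n hn => ?_
    rw [intervalIntegral.integral_finsetSum fun m _ => ?_]
    · simp_rw [hint, sum_ite_eq, if_pos hn]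
    · exact (continuous_const.mul (continuous_fourierChar_mul _)).intervalIntegrable _ _
  · exact (continuous_finsetSum _ fun m _ =>
      continuous_const.mul (continuous_fourierChar_mul _)).intervalIntegrable _ _

lemma continuous_expSum (A : Finset ℕ) (a : ℕ → ℂ) : Continuous (expSum A a) :=
  continuous_finsetSum _ fun _ _ => continuous_const.mul (continuous_fourierChar_mul _)

lemma hasDerivAt_expSum (A : Finset ℕ) (a : ℕ → ℂ) (t : ℝ) :
    HasDerivAt (expSum A a) (expSum A (fun n => 2 * π * Complex.I * n * a n) t) t := by
  refine HasDerivAt.fun_sum fun n _ => ?_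
  have h := ((hasDerivAt_fourierChar (n * t)).scomp t
    ((hasDerivAt_id' t).const_mul (n : ℝ))).const_mul (a n)
  refine h.congr_deriv ?_
  rw [mul_one, Complex.real_smul]
  push_cast
  ring

def residueCount (A : Finset ℕ) (r : ℕ) (b : ZMod r) : ℕ := #{n ∈ A | ((n : ℕ) : ZMod r) = b}

lemma sum_comp_natCast_eq_sum_residueCount_smul {M : Type*} [AddCommMonoid M] (A : Finset ℕ)
    (r : ℕ) [NeZero r] (f : ZMod r → M) :
    ∑ n ∈ A, f n = ∑ b, residueCount A r b • f b := by
  rw [← sum_fiberwise A (fun n => (n : ZMod r))]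
  refine sum_congr rfl fun b _ => ?_
  rw [sum_congr rfl fun n hn => by rw [(mem_filter.1 hn).2], sum_const]
  rfl

lemma sum_residueCount (A : Finset ℕ) (r : ℕ) [NeZero r] : ∑ b, residueCount A r b = #A := by
  have := (sum_comp_natCast_eq_sum_residueCount_smul A r fun _ => 1).symm
  simpa only [smul_eq_mul, mul_one, ← card_eq_sum_ones] using this

theorem sum_range_norm_sq_expSum (A : Finset ℕ) (r : ℕ) [NeZero r] :
    ∑ h ∈ range r, ‖expSum A 1 (h / r)‖ ^ 2 = r * ∑ b, (residueCount A r b : ℝ) ^ 2 := by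
  apply Complex.ofReal_injective
  push_cast
  simp_rw [← Complex.mul_conj', expSum_mul_conj, Pi.one_apply, map_one, one_mul, ← mul_div_assoc]
  rw [sum_comm]
  simp_rw [sum_comm (s := range r), sum_range_fourierChar_mul_div _ (NeZero.pos r),
    ← ZMod.intCast_eq_intCast_iff_dvd_sub, Int.cast_natCast, sum_ite, sum_const_zero, add_zero,
    sum_const, nsmul_eq_mul]
  refine (sum_comp_natCast_eq_sum_residueCount_smul A r
    fun b => (residueCount A r b : ℂ) * r).trans ?_
  simp only [nsmul_eq_mul, mul_sum]
  exact sum_congr rfl fun b _ => by ring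

theorem sum_sq_residueCount_sub_mean (A : Finset ℕ) (r : ℕ) [NeZero r] :
    ∑ b, ((residueCount A r b : ℝ) - (1 / (r : ℝ)) * #A) ^ 2 =
      (1 / (r : ℝ)) * ∑ h ∈ Ico 1 r, ‖expSum A 1 (h / r)‖ ^ 2 := by
  have hr : (r : ℝ) ≠ 0 := NeZero.ne _
  have hS0 : ‖expSum A 1 0‖ ^ 2 = (#A : ℝ) ^ 2 := by simp [expSum]
  have hpars := sum_range_norm_sq_expSum A r
  rw [range_eq_Ico, sum_eq_sum_Ico_succ_bot (NeZero.pos r)] at hpars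
  simp only [CharP.cast_eq_zero, zero_div, hS0, zero_add] at hpars
  have hsum : ∑ b, (residueCount A r b : ℝ) = #A := by exact_mod_cast sum_residueCount A r
  simp only [sub_sq, sum_add_distrib, sum_sub_distrib, ← sum_mul, ← mul_sum, hsum, sum_const,
    card_univ, ZMod.card, nsmul_eq_mul]
  rw [eq_sub_iff_add_eq'.2 hpars]
  field_simp
  ring

lemma sub_le_integral_abs_deriv {g g' : ℝ → ℝ} (hg : ∀ u, HasDerivAt g (g' u) u)
    (hg' : Continuous g') {a b t u : ℝ} (ht : t ∈ Set.Icc a b) (hu : u ∈ Set.Icc a b) :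
    g t - g u ≤ ∫ v in a..b, |g' v| := by
  have hint : IntervalIntegrable (fun v => |g' v|) volume a b := hg'.abs.intervalIntegrable a b
  rw [← intervalIntegral.integral_eq_sub_of_hasDerivAt (fun v _ => hg v)
    (hg'.intervalIntegrable u t)]
  rcases le_total u t with hut | htu
  · calc ∫ v in u..t, g' v ≤ ∫ v in u..t, |g' v| :=
          intervalIntegral.integral_mono_on hut (hg'.intervalIntegrable u t)
            (hg'.abs.intervalIntegrable u t) fun v _ => le_abs_self _
      _ ≤ ∫ v in a..b, |g' v| := intervalIntegral.integral_mono_interval hu.1 hut ht.2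
          (Filter.Eventually.of_forall fun v => abs_nonneg _) hint
  · calc ∫ v in u..t, g' v = ∫ v in t..u, -g' v := by
          rw [intervalIntegral.integral_symm, intervalIntegral.integral_neg]
      _ ≤ ∫ v in t..u, |g' v| :=
          intervalIntegral.integral_mono_on htu (hg'.neg.intervalIntegrable t u)
            (hg'.abs.intervalIntegrable t u) fun v _ => neg_le_abs _
      _ ≤ ∫ v in a..b, |g' v| := intervalIntegral.integral_mono_interval ht.1 htu hu.2
          (Filter.Eventually.of_forall fun v => abs_nonneg _) hint

theorem le_average_add_integral_abs_deriv {g g' : ℝ → ℝ} (hg : ∀ u, HasDerivAt g (g' u) u)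
    (hg' : Continuous g') {a b t : ℝ} (hab : a < b) (ht : t ∈ Set.Icc a b) :
    g t ≤ (b - a)⁻¹ * (∫ u in a..b, g u) + ∫ u in a..b, |g' u| := by
  have hgc : Continuous g := continuous_iff_continuousAt.2 fun u => (hg u).continuousAt
  have hba : 0 < b - a := sub_pos.2 hab
  have key : (b - a) * g t ≤ (∫ u in a..b, g u) + (b - a) * ∫ u in a..b, |g' u| := by
    have := intervalIntegral.integral_mono_on (g := fun u => g u + ∫ v in a..b, |g' v|) hab.le
      (intervalIntegrable_const (μ := volume)) ((hgc.add continuous_const).intervalIntegrable a b)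
      fun u hu => (sub_le_iff_le_add'.1 (sub_le_integral_abs_deriv hg hg' ht hu))
    rwa [intervalIntegral.integral_const, intervalIntegral.integral_add
      (hgc.intervalIntegrable a b) (intervalIntegrable_const (μ := volume)),
      intervalIntegral.integral_const, smul_eq_mul, smul_eq_mul] at this
  rw [inv_mul_eq_div, ← sub_le_iff_le_add, le_div_iff₀ hba]
  linarith

theorem sum_integral_le_integral_of_separated {f : ℝ → ℝ} (hf : Continuous f)
    (hf0 : ∀ u, 0 ≤ f u) {a b η : ℝ} (hab : a ≤ b) (hη : 0 ≤ η) {T : Finset ℝ}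
    (hT : ∀ t ∈ T, a ≤ t - η ∧ t + η ≤ b)
    (hsep : (T : Set ℝ).Pairwise fun t s => 2 * η ≤ |t - s|) :
    ∑ t ∈ T, ∫ u in (t - η)..(t + η), f u ≤ ∫ u in a..b, f u := by
  have hdisj : (T : Set ℝ).PairwiseDisjoint fun t => Set.Ioc (t - η) (t + η) := by
    intro t ht s hs hts
    have h : 2 * η ≤ |t - s| := hsep ht hs hts
    refine Set.Ioc_disjoint_Ioc.2 ?_
    rcases le_total s t with hst | hts'
    · rw [abs_of_nonneg (by linarith)] at h
      exact (min_le_right _ _).trans ((by linarith : s + η ≤ t - η).trans (le_max_left _ _))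
    · rw [abs_of_nonpos (by linarith)] at h
      exact (min_le_left _ _).trans ((by linarith : t + η ≤ s - η).trans (le_max_right _ _))
  have hsub : (⋃ t ∈ T, Set.Ioc (t - η) (t + η)) ⊆ Set.Ioc a b :=
    Set.iUnion₂_subset fun t ht => Set.Ioc_subset_Ioc (hT t ht).1 (hT t ht).2
  rw [sum_congr rfl fun t _ => intervalIntegral.integral_of_le (by linarith),
    intervalIntegral.integral_of_le hab]
  rw [← integral_biUnion_finset T (fun _ _ => measurableSet_Ioc) hdisj
    fun _ _ => hf.integrableOn_Ioc]
  exact setIntegral_mono_set hf.integrableOn_Ioc (Filter.Eventually.of_forall hf0)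
    (Filter.Eventually.of_forall hsub)

lemma two_mul_le_mul_sq_add_inv_mul_sq {c : ℝ} (hc : 0 < c) (x y : ℝ) :
    2 * x * y ≤ c * x ^ 2 + c⁻¹ * y ^ 2 := by
  have h : c * x ^ 2 + c⁻¹ * y ^ 2 - 2 * x * y = c⁻¹ * (c * x - y) ^ 2 := by
    field_simp
    ring
  nlinarith [h, mul_nonneg (inv_nonneg.2 hc.le) (sq_nonneg (c * x - y))]

theorem integral_abs_deriv_norm_sq_expSum_le (A : Finset ℕ) (a : ℕ → ℂ) {N : ℕ}
    (hA : ∀ n ∈ A, n ≤ N) :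
    ∫ t in (0 : ℝ)..1,
        |2 * inner ℝ (expSum A a t) (expSum A (fun n => 2 * π * Complex.I * n * a n) t)|
      ≤ (4 * π * N + 1) * ∑ n ∈ A, ‖a n‖ ^ 2 := by
  set S := expSum A a
  set S' := expSum A fun n => 2 * π * Complex.I * n * a n
  set c := 2 * π * N + 1
  have hc : 0 < c := by positivity
  have hpt (t : ℝ) : |2 * inner ℝ (S t) (S' t)| ≤ c * ‖S t‖ ^ 2 + c⁻¹ * ‖S' t‖ ^ 2 := by
    rw [abs_mul, abs_two]
    calc 2 * |inner ℝ (S t) (S' t)| ≤ 2 * ‖S t‖ * ‖S' t‖ := by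
          rw [mul_assoc]; gcongr; exact abs_real_inner_le_norm _ _
      _ ≤ _ := two_mul_le_mul_sq_add_inv_mul_sq hc _ _
  have hS' : ∫ t in (0 : ℝ)..1, ‖S' t‖ ^ 2 ≤ (2 * π * N) ^ 2 * ∑ n ∈ A, ‖a n‖ ^ 2 := by
    rw [integral_norm_sq_expSum, mul_sum]
    refine sum_le_sum fun n hn => ?_
    have hn : (n : ℝ) ≤ N := by exact_mod_cast hA n hn
    simp only [norm_mul, Complex.norm_ofNat, Complex.norm_real, Complex.norm_I,
      Complex.norm_natCast, norm_eq_abs, abs_of_pos pi_pos, mul_one, mul_pow]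
    gcongr
  have hSc : Continuous fun t => ‖S t‖ ^ 2 := by have := continuous_expSum A a; fun_prop
  have hS'c : Continuous fun t => ‖S' t‖ ^ 2 := by
    have := continuous_expSum A fun n => 2 * π * Complex.I * n * a n; fun_prop
  have hg'c : Continuous fun t => |2 * inner ℝ (S t) (S' t)| :=
    (continuous_const.mul ((continuous_expSum _ _).inner (continuous_expSum _ _))).abs
  calc _ ≤ ∫ t in (0 : ℝ)..1, (c * ‖S t‖ ^ 2 + c⁻¹ * ‖S' t‖ ^ 2) :=
        intervalIntegral.integral_mono_on zero_le_one (hg'c.intervalIntegrable 0 1)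
          (((continuous_const.mul hSc).add (continuous_const.mul hS'c)).intervalIntegrable 0 1)
          fun t _ => hpt t
    _ = c * ∑ n ∈ A, ‖a n‖ ^ 2 + c⁻¹ * ∫ t in (0 : ℝ)..1, ‖S' t‖ ^ 2 := by
        rw [intervalIntegral.integral_add (f := fun t => c * ‖S t‖ ^ 2)
          (g := fun t => c⁻¹ * ‖S' t‖ ^ 2) ((continuous_const.mul hSc).intervalIntegrable 0 1)
          ((continuous_const.mul hS'c).intervalIntegrable 0 1), intervalIntegral.integral_const_mul,
          intervalIntegral.integral_const_mul, integral_norm_sq_expSum]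
    _ ≤ c * ∑ n ∈ A, ‖a n‖ ^ 2 + c⁻¹ * ((2 * π * N) ^ 2 * ∑ n ∈ A, ‖a n‖ ^ 2) := by gcongr
    _ ≤ (4 * π * N + 1) * ∑ n ∈ A, ‖a n‖ ^ 2 := by
        have : c⁻¹ * (2 * π * N) ^ 2 ≤ 2 * π * N := by
          rw [inv_mul_le_iff₀ hc]; nlinarith [pi_pos]
        rw [← mul_assoc, ← add_mul]
        exact mul_le_mul_of_nonneg_right (by linarith) (sum_nonneg fun _ _ => by positivity)

theorem sum_norm_sq_expSum_le_of_separated (A : Finset ℕ) (a : ℕ → ℂ) {N : ℕ}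
    (hA : ∀ n ∈ A, n ≤ N) {T : Finset ℝ} {δ : ℝ} (hδ : 0 < δ)
    (hT : ∀ t ∈ T, 0 ≤ t - δ / 2 ∧ t + δ / 2 ≤ 1)
    (hsep : (T : Set ℝ).Pairwise fun t s => δ ≤ |t - s|) :
    ∑ t ∈ T, ‖expSum A a t‖ ^ 2 ≤ (δ⁻¹ + 4 * π * N + 1) * ∑ n ∈ A, ‖a n‖ ^ 2 := by
  set S := expSum A a
  set S' := expSum A fun n => 2 * π * Complex.I * n * a n
  have hg (u : ℝ) : HasDerivAt (fun t => ‖S t‖ ^ 2) (2 * inner ℝ (S u) (S' u)) u :=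
    (hasDerivAt_expSum A a u).norm_sq
  have hgc : Continuous fun u => ‖S u‖ ^ 2 := (continuous_expSum A a).norm.pow 2
  have hg'c : Continuous fun u => 2 * inner ℝ (S u) (S' u) :=
    continuous_const.mul ((continuous_expSum _ _).inner (continuous_expSum _ _))
  have hsep' : (T : Set ℝ).Pairwise fun t s => 2 * (δ / 2) ≤ |t - s| :=
    fun t ht s hs hts => by linarith [hsep ht hs hts]
  calc ∑ t ∈ T, ‖S t‖ ^ 2
      ≤ ∑ t ∈ T, (δ⁻¹ * (∫ u in (t - δ / 2)..(t + δ / 2), ‖S u‖ ^ 2) +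
          ∫ u in (t - δ / 2)..(t + δ / 2), |2 * inner ℝ (S u) (S' u)|) := by
        refine sum_le_sum fun t _ => ?_
        have := le_average_add_integral_abs_deriv hg hg'c (a := t - δ / 2) (b := t + δ / 2)
          (t := t) (by linarith) ⟨by linarith, by linarith⟩
        rwa [show t + δ / 2 - (t - δ / 2) = δ by ring] at this
    _ = δ⁻¹ * (∑ t ∈ T, ∫ u in (t - δ / 2)..(t + δ / 2), ‖S u‖ ^ 2) +
          ∑ t ∈ T, ∫ u in (t - δ / 2)..(t + δ / 2), |2 * inner ℝ (S u) (S' u)| := by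
        rw [sum_add_distrib, mul_sum]
    _ ≤ δ⁻¹ * (∫ u in (0 : ℝ)..1, ‖S u‖ ^ 2) +
          ∫ u in (0 : ℝ)..1, |2 * inner ℝ (S u) (S' u)| := by
        gcongr
        · exact sum_integral_le_integral_of_separated hgc (fun _ => by positivity) zero_le_one
            (by linarith) hT hsep'
        · exact sum_integral_le_integral_of_separated hg'c.abs (fun _ => abs_nonneg _)
            zero_le_one (by linarith) hT hsep'
    _ ≤ δ⁻¹ * ∑ n ∈ A, ‖a n‖ ^ 2 + (4 * π * N + 1) * ∑ n ∈ A, ‖a n‖ ^ 2 := by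
        rw [integral_norm_sq_expSum]
        gcongr
        exact integral_abs_deriv_norm_sq_expSum_le A a hA
    _ = (δ⁻¹ + 4 * π * N + 1) * ∑ n ∈ A, ‖a n‖ ^ 2 := by ring

lemma one_div_sq_le_abs_div_sub_div {h h' r r' : ℕ} {Q : ℝ} (hr : 0 < r) (hr' : 0 < r')
    (hrQ : (r : ℝ) ≤ Q) (hr'Q : (r' : ℝ) ≤ Q) (hne : (h : ℝ) / r ≠ h' / r') :
    1 / Q ^ 2 ≤ |(h : ℝ) / r - h' / r'| := by
  have hr0 : (0 : ℝ) < r := by exact_mod_cast hr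
  have hr0' : (0 : ℝ) < r' := by exact_mod_cast hr'
  have hnum : (h * r' - r * h' : ℤ) ≠ 0 := by
    rw [Ne, sub_eq_zero]
    intro heq
    apply hne
    rw [div_eq_div_iff hr0.ne' hr0'.ne']
    exact_mod_cast heq.trans (mul_comm _ _)
  have hnum1 : (1 : ℝ) ≤ |(h : ℝ) * r' - r * h'| := by
    exact_mod_cast Int.one_le_abs hnum
  rw [div_sub_div _ _ hr0.ne' hr0'.ne', abs_div, abs_of_pos (mul_pos hr0 hr0')]
  calc 1 / Q ^ 2 ≤ 1 / (r * r') := by gcongr; nlinarith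
    _ ≤ _ := by gcongr

lemma injOn_div_sigma_Ico {P : Finset ℕ} (hP : ∀ r ∈ P, r.Prime) :
    Set.InjOn (fun q : (_ : ℕ) × ℕ => (q.2 : ℝ) / q.1) (P.sigma fun r => Ico 1 r) := by
  rintro ⟨r, h⟩ hq ⟨r', h'⟩ hq' heq
  simp only [coe_sigma, Set.mem_sigma_iff, mem_coe, mem_Ico] at hq hq' heq
  have hr := hP r hq.1
  have hr' := hP r' hq'.1
  rw [div_eq_div_iff (by exact_mod_cast hr.ne_zero) (by exact_mod_cast hr'.ne_zero)] at heq
  have hcross : h * r' = h' * r := by exact_mod_cast heq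
  obtain rfl : r = r' := by
    have hdvd : r ∣ h * r' := ⟨h', by rw [hcross, mul_comm]⟩
    rcases hr.dvd_mul.1 hdvd with hd | hd
    · exact absurd (Nat.le_of_dvd hq.2.1 hd) (not_le.2 hq.2.2)
    · exact (Nat.prime_dvd_prime_iff_eq hr hr').1 hd
  obtain rfl : h = h' := Nat.eq_of_mul_eq_mul_right hr.pos hcross
  rfl

theorem sum_primes_sum_norm_sq_expSum_le (A : Finset ℕ) (a : ℕ → ℂ) {N : ℕ}
    (hA : ∀ n ∈ A, n ≤ N) {P : Finset ℕ} {Q : ℝ} (hP : ∀ r ∈ P, r.Prime ∧ (r : ℝ) ≤ Q) :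
    ∑ r ∈ P, ∑ h ∈ Ico 1 r, ‖expSum A a (h / r)‖ ^ 2 ≤
      (Q ^ 2 + 4 * π * N + 1) * ∑ n ∈ A, ‖a n‖ ^ 2 := by
  rcases P.eq_empty_or_nonempty with rfl | ⟨r₀, hr₀⟩
  · simp only [sum_empty]; positivity
  have hQ : 2 ≤ Q := le_trans (by exact_mod_cast (hP r₀ hr₀).1.two_le) (hP r₀ hr₀).2
  set T := (P.sigma fun r => Ico 1 r).image fun q => (q.2 : ℝ) / q.1
  have hmem {t : ℝ} (ht : t ∈ T) :
      ∃ r h : ℕ, r.Prime ∧ (r : ℝ) ≤ Q ∧ 1 ≤ h ∧ h < r ∧ t = h / r := by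
    obtain ⟨⟨r, h⟩, hq, rfl⟩ := mem_image.1 ht
    simp only [mem_sigma, mem_Ico] at hq
    exact ⟨r, h, (hP r hq.1).1, (hP r hq.1).2, hq.2.1, hq.2.2, rfl⟩
  have hδ : 0 < 1 / Q ^ 2 := by positivity
  have hT : ∀ t ∈ T, 0 ≤ t - 1 / Q ^ 2 / 2 ∧ t + 1 / Q ^ 2 / 2 ≤ 1 := by
    intro t ht
    obtain ⟨r, h, hr, hrQ, h1, hhr, rfl⟩ := hmem ht
    have hr0 : (0 : ℝ) < r := by exact_mod_cast hr.pos
    have hδr : 1 / Q ^ 2 / 2 ≤ 1 / r := by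
      rw [div_div]; gcongr; nlinarith
    have h1' : (1 : ℝ) ≤ h := by exact_mod_cast h1
    have hhr' : (h : ℝ) + 1 ≤ r := by exact_mod_cast hhr
    constructor
    · have : 1 / (r : ℝ) ≤ h / r := by gcongr
      linarith
    · have : (h : ℝ) / r + 1 / r ≤ 1 := by
        rw [← add_div, div_le_one hr0]; exact hhr'
      linarith
  have hsep : (T : Set ℝ).Pairwise fun t s => 1 / Q ^ 2 ≤ |t - s| := by
    intro t ht s hs hts
    obtain ⟨r, h, hr, hrQ, -, -, rfl⟩ := hmem ht
    obtain ⟨r', h', hr', hr'Q, -, -, rfl⟩ := hmem hs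
    exact one_div_sq_le_abs_div_sub_div hr.pos hr'.pos hrQ hr'Q hts
  have := sum_norm_sq_expSum_le_of_separated A a hA hδ hT hsep
  rwa [sum_image (injOn_div_sigma_Ico fun r hr => (hP r hr).1), sum_sigma, one_div, inv_inv]
    at this

lemma mem_primesIn {a b : ℝ} {n : ℕ} : n ∈ primesIn a b ↔ n.Prime ∧ a < n ∧ (n : ℝ) ≤ b := by
  simp only [primesIn, mem_filter, mem_Icc, and_iff_right_iff_imp]
  exact fun ⟨hp, _, hb⟩ => ⟨hp.one_lt.le, by exact_mod_cast hb.trans (Nat.le_ceil b)⟩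

lemma primesIn_subset_Ioc {a b : ℝ} (ha : 0 ≤ a) : primesIn a b ⊆ Ioc ⌊a⌋₊ ⌊b⌋₊ := by
  intro n hn
  obtain ⟨-, han, hnb⟩ := mem_primesIn.1 hn
  exact mem_Ioc.2 ⟨(Nat.floor_lt ha).2 han, Nat.le_floor hnb⟩

theorem card_primesIn_mul_log_le {a b : ℝ} (ha : 0 < a) (hb : 0 ≤ b) :
    (#(primesIn a b) : ℝ) * log a ≤ log 4 * b := by
  calc (#(primesIn a b) : ℝ) * log a = ∑ p ∈ primesIn a b, log a := by
        rw [sum_const, nsmul_eq_mul]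
    _ ≤ ∑ p ∈ primesIn a b, log p :=
        sum_le_sum fun p hp => log_le_log ha (mem_primesIn.1 hp).2.1.le
    _ ≤ Chebyshev.theta b := by
        rw [Chebyshev.theta]
        refine sum_le_sum_of_subset_of_nonneg (fun p hp => ?_) fun p _ _ => log_natCast_nonneg p
        obtain ⟨hpp, -, hpb⟩ := mem_primesIn.1 hp
        exact mem_filter.2 ⟨mem_Ioc.2 ⟨hpp.pos, Nat.le_floor hpb⟩, hpp⟩
    _ ≤ log 4 * b := Chebyshev.theta_le_log4_mul_x hb

theorem residueCount_le_of_subset_Ioc {A : Finset ℕ} {u v : ℕ} (huv : u ≤ v) (hA : A ⊆ Ioc u v)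
    (r : ℕ) [NeZero r] (b : ZMod r) :
    (residueCount A r b : ℝ) ≤ ((v : ℝ) - u) / r + 1 := by
  have hr : (0 : ℚ) < r := by exact_mod_cast NeZero.pos r
  have hsub : {n ∈ A | ((n : ℕ) : ZMod r) = b} ⊆ {n ∈ Ioc u v | n ≡ b.val [MOD r]} := by
    refine filter_subset_filter _ hA |>.trans (subset_of_eq (filter_congr fun n _ => ?_))
    rw [← ZMod.natCast_eq_natCast_iff, ZMod.natCast_zmod_val]
  have hcount := Nat.Ioc_filter_modEq_card u v (NeZero.pos r) b.val
  have hfloor : ((⌊((v : ℚ) - b.val) / r⌋ - ⌊((u : ℚ) - b.val) / r⌋ : ℤ) : ℚ) ≤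
      ((v : ℚ) - u) / r + 1 := by
    push_cast
    have h1 := Int.floor_le (((v : ℚ) - b.val) / r)
    have h2 := Int.lt_floor_add_one (((u : ℚ) - b.val) / r)
    have : ((v : ℚ) - b.val) / r - ((u : ℚ) - b.val) / r = ((v : ℚ) - u) / r := by ring
    linarith
  have hnn : (0 : ℚ) ≤ ((v : ℚ) - u) / r + 1 := by
    have : (u : ℚ) ≤ v := by exact_mod_cast huv
    have : (0 : ℚ) ≤ ((v : ℚ) - u) / r := div_nonneg (by linarith) hr.le
    linarith
  have hq : (residueCount A r b : ℚ) ≤ ((v : ℚ) - u) / r + 1 := by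
    calc (residueCount A r b : ℚ) ≤ #{n ∈ Ioc u v | n ≡ b.val [MOD r]} := by
          exact_mod_cast card_le_card hsub
      _ = ((#{n ∈ Ioc u v | n ≡ b.val [MOD r]} : ℤ) : ℚ) := rfl
      _ ≤ ((v : ℚ) - u) / r + 1 := by
          rw [hcount, Int.cast_max, Int.cast_zero]
          exact max_le hfloor hnn
  have := (Rat.cast_le (K := ℝ)).2 hq
  push_cast at this
  exact this

lemma card_filter_dvd_add_eq_residueCount (A : Finset ℕ) (r q : ℕ) :
    #{p ∈ A | r ∣ p + q} = residueCount A r (-q) := by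
  refine congrArg card (filter_congr fun p _ => ?_)
  rw [← ZMod.natCast_eq_zero_iff, Nat.cast_add, add_eq_zero_iff_eq_neg]

theorem sum_sq_card_filter_dvd_add_sub_le (A : Finset ℕ) (r : ℕ) [NeZero r] {M : ℝ}
    (hM : ∀ b, (residueCount A r b : ℝ) ≤ M) :
    ∑ q ∈ A, ((#{p ∈ A | r ∣ p + q} : ℝ) - (1 / (r : ℝ)) * #A) ^ 2 ≤
      M * ((1 / (r : ℝ)) * ∑ h ∈ Ico 1 r, ‖expSum A 1 (h / r)‖ ^ 2) := by
  set c := (1 / (r : ℝ)) * #A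
  simp_rw [card_filter_dvd_add_eq_residueCount]
  rw [sum_comp_natCast_eq_sum_residueCount_smul A r
    fun b => ((residueCount A r (-b) : ℝ) - c) ^ 2]
  calc _ ≤ ∑ b, M * ((residueCount A r (-b) : ℝ) - c) ^ 2 :=
        sum_le_sum fun b _ => by rw [nsmul_eq_mul]; gcongr; exact hM b
    _ = M * ∑ b, ((residueCount A r b : ℝ) - c) ^ 2 := by
        rw [← mul_sum, Fintype.sum_equiv (Equiv.neg (ZMod r))
          (fun b => ((residueCount A r (-b) : ℝ) - c) ^ 2)
          (fun b => ((residueCount A r b : ℝ) - c) ^ 2) fun _ => rfl]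
    _ = _ := by rw [sum_sq_residueCount_sub_mean]

lemma residueCount_primesIn_le {x : ℝ} (hx : 0 ≤ x) (r : ℕ) [NeZero r] (b : ZMod r) :
    (residueCount (primesIn x (2 * x)) r b : ℝ) ≤ x / r + 2 := by
  have hr : (1 : ℝ) ≤ r := by exact_mod_cast NeZero.one_le
  have huv : ⌊x⌋₊ ≤ ⌊2 * x⌋₊ := Nat.floor_le_floor (by linarith)
  have hlen : (⌊2 * x⌋₊ : ℝ) - ⌊x⌋₊ ≤ x + 1 := by
    linarith [Nat.floor_le (by linarith : 0 ≤ 2 * x), Nat.lt_floor_add_one x]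
  calc _ ≤ ((⌊2 * x⌋₊ : ℝ) - ⌊x⌋₊) / r + 1 :=
        residueCount_le_of_subset_Ioc huv (primesIn_subset_Ioc hx) r b
    _ ≤ (x + 1) / r + 1 := by gcongr
    _ ≤ x / r + 2 := by
        rw [add_div]
        have : 1 / (r : ℝ) ≤ 1 := by rw [div_le_one (by positivity)]; exact hr
        linarith

theorem sum_sq_discrepancy_le {x R : ℝ} (hR : 0 < R) (hRx : 2 * R ≤ x) :
    ∑ r ∈ primesIn R (2 * R), ∑ q ∈ primesIn x (2 * x),
        ((#{p ∈ primesIn x (2 * x) | r ∣ p + q} : ℝ) - (1 / (r : ℝ)) * #(primesIn x (2 * x))) ^ 2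
      ≤ 2 * x / R ^ 2 * (4 * R ^ 2 + 8 * π * x + 1) * #(primesIn x (2 * x)) := by
  set A := primesIn x (2 * x)
  set P := primesIn R (2 * R)
  have hx : 0 ≤ x := by linarith
  have hP (r : ℕ) (hr : r ∈ P) : r.Prime ∧ R < r ∧ (r : ℝ) ≤ 2 * R := mem_primesIn.1 hr
  have hA (n : ℕ) (hn : n ∈ A) : n ≤ ⌊2 * x⌋₊ := Nat.le_floor (mem_primesIn.1 hn).2.2
  have hperr (r : ℕ) (hr : r ∈ P) :
      ∑ q ∈ A, ((#{p ∈ A | r ∣ p + q} : ℝ) - (1 / (r : ℝ)) * #A) ^ 2 ≤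
        2 * x / R ^ 2 * ∑ h ∈ Ico 1 r, ‖expSum A 1 (h / r)‖ ^ 2 := by
    obtain ⟨hrp, hRr, -⟩ := hP r hr
    have : NeZero r := ⟨hrp.ne_zero⟩
    have hr0 : (0 : ℝ) < r := hR.trans hRr
    have hM : x / r + 2 ≤ 2 * x / R := by
      have : x / r ≤ x / R := by gcongr
      have : 2 ≤ x / R := by rw [le_div_iff₀ hR]; linarith
      linarith [show 2 * x / R = x / R + x / R by ring]
    calc _ ≤ (x / r + 2) * ((1 / (r : ℝ)) * ∑ h ∈ Ico 1 r, ‖expSum A 1 (h / r)‖ ^ 2) :=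
          sum_sq_card_filter_dvd_add_sub_le A r (residueCount_primesIn_le hx r)
      _ ≤ 2 * x / R * ((1 / R) * ∑ h ∈ Ico 1 r, ‖expSum A 1 (h / r)‖ ^ 2) := by
          gcongr
      _ = _ := by ring
  have hsieve := sum_primes_sum_norm_sq_expSum_le A 1 hA (Q := 2 * R)
    fun r hr => ⟨(hP r hr).1, (hP r hr).2.2⟩
  have hfloor : (⌊2 * x⌋₊ : ℝ) ≤ 2 * x := Nat.floor_le (by linarith)
  simp only [Pi.one_apply, norm_one, one_pow, sum_const, nsmul_eq_mul, mul_one] at hsieve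
  calc _ ≤ ∑ r ∈ P, 2 * x / R ^ 2 * ∑ h ∈ Ico 1 r, ‖expSum A 1 (h / r)‖ ^ 2 := sum_le_sum hperr
    _ = 2 * x / R ^ 2 * ∑ r ∈ P, ∑ h ∈ Ico 1 r, ‖expSum A 1 (h / r)‖ ^ 2 := by rw [mul_sum]
    _ ≤ 2 * x / R ^ 2 * (((2 * R) ^ 2 + 4 * π * ⌊2 * x⌋₊ + 1) * #A) := by gcongr
    _ ≤ 2 * x / R ^ 2 * (4 * R ^ 2 + 8 * π * x + 1) * #A := by
        have : (2 * R) ^ 2 + 4 * π * ⌊2 * x⌋₊ + 1 ≤ 4 * R ^ 2 + 8 * π * x + 1 := by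
          nlinarith [pi_pos]
        rw [← mul_assoc]
        gcongr

lemma eventually_two_mul_log_le_sqrt : ∀ᶠ x : ℝ in Filter.atTop, 2 * log x ≤ √x := by
  filter_upwards [(isLittleO_log_rpow_atTop one_half_pos).bound one_half_pos] with x hx
  rw [norm_eq_abs, norm_eq_abs, ← sqrt_eq_rpow, abs_of_nonneg (sqrt_nonneg x)] at hx
  linarith [le_abs_self (log x)]

theorem stmt_4 :
    ∃ C : ℝ, 0 < C ∧ ∃ x0 : ℝ, ∀ x : ℝ, x0 ≤ x →
      ∑ r ∈ primesIn (Real.sqrt x * Real.log x) (2 * Real.sqrt x * Real.log x),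
        ∑ p1 ∈ primesIn x (2 * x),
          ((((primesIn x (2 * x)).filter fun p => r ∣ (p + p1)).card : ℝ)
            - (1 / (r : ℝ)) * ((primesIn x (2 * x)).card : ℝ)) ^ 2
      ≤ C * x ^ 2 / Real.log x := by
  obtain ⟨x0, hx0⟩ := Filter.eventually_atTop.1 ((Filter.eventually_ge_atTop 1).and
    ((tendsto_log_atTop.eventually_ge_atTop 6).and eventually_two_mul_log_le_sqrt))
  refine ⟨30, by norm_num, x0, fun x hx => ?_⟩
  obtain ⟨hx1, hL, hLx⟩ := hx0 x hx
  have hxpos : 0 < x := by linarith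
  have hsq := sq_sqrt hxpos.le
  have hR : 0 < √x * log x := by positivity
  have hRx : 2 * (√x * log x) ≤ x := by nlinarith [sqrt_nonneg x]
  have hcoef : 2 * x / (√x * log x) ^ 2 * (4 * (√x * log x) ^ 2 + 8 * π * x + 1) ≤ 10 * x := by
    rw [mul_pow, hsq, div_mul_eq_mul_div, div_le_iff₀ (by positivity)]
    nlinarith [pi_lt_d2, mul_le_mul_of_nonneg_left (by nlinarith : (36 : ℝ) ≤ log x ^ 2)
      (sq_nonneg x)]
  have hcard : (#(primesIn x (2 * x)) : ℝ) ≤ 3 * x / log x := by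
    rw [le_div_iff₀ (by linarith)]
    nlinarith [card_primesIn_mul_log_le hxpos (by linarith : 0 ≤ 2 * x), log_four_eq, log_two_lt_d9]
  rw [mul_assoc 2]
  calc _ ≤ _ := sum_sq_discrepancy_le hR hRx
    _ ≤ 10 * x * (3 * x / log x) := by gcongr
    _ = 30 * x ^ 2 / log x := by ring
end
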